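/- In a strict 2-Hopf algebra, the degree-0 data (G₀, Δ₀', S₀⁰, η₀, ε₀) forms a Hopf algebra: μ∘(id⊗S₀⁰)∘Δ₀' = η₀∘ε₀ = μ∘(S₀⁰⊗id)∘Δ₀' on G₀, derived from the antipode conditions on the graded coproduct components together with t∘η₋₁ = η₀, ε₀ = ε₋₁∘t, S₀⁰∘t = t∘S₀¹, the equivariance of t, and the coPeiffer identity Δ₀' = ½(t⊗1 + 1⊗t)Δ₀ (equivalently Δ₀' = (t⊗id)Δ₀ˡ = (id⊗t)Δ₀ʳ). -/

import Mathlib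

/-!
Apply `t` to the degree-(-1) antipode identities for `Δ₀ˡ`. Since `t (y ◁ x) = t y * x`, the
images are the degree-0 identities for `Δ₀' = (t ⊗ id) Δ₀ˡ`: in the first the antipode already
sits on the `G₀` factor, in the second `S₀⁰ ∘ t = t ∘ S₀¹` moves it there; `t η₋₁ = η₀` fixes
the right-hand side.
-/

open scoped TensorProduct

structure AssocTwoAlgebra (k : Type*) [CommRing k] (G₀ G₁ : Type*)
    [NonUnitalRing G₀] [NonUnitalRing G₁] [Module k G₀] [Module k G₁] where
  t : G₁ →ₗ[k] G₀
  t_mul : ∀ y y' : G₁, t (y * y') = t y * t y'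
  actL : G₀ →ₗ[k] G₁ →ₗ[k] G₁
  actR : G₁ →ₗ[k] G₀ →ₗ[k] G₁
  actL_mul : ∀ (x x' : G₀) (y : G₁), actL (x * x') y = actL x (actL x' y)
  actLR : ∀ (x : G₀) (y : G₁) (x' : G₀), actR (actL x y) x' = actL x (actR y x')
  actR_mul : ∀ (y : G₁) (x x' : G₀), actR y (x * x') = actR (actR y x) x'
  equivL : ∀ (x : G₀) (y : G₁), t (actL x y) = x * t y
  equivR : ∀ (y : G₁) (x : G₀), t (actR y x) = t y * x
  peifferL : ∀ y y' : G₁, actL (t y) y' = y * y'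
  peifferR : ∀ y y' : G₁, actR y (t y') = y * y'

namespace AssocTwoAlgebra

open TensorProduct LinearMap

variable {k G₀ G₁ : Type*} [CommRing k] [NonUnitalRing G₀] [NonUnitalRing G₁]
  [Module k G₀] [Module k G₁] [SMulCommClass k G₀ G₀] [IsScalarTower k G₀ G₀]
  (A : AssocTwoAlgebra k G₀ G₁)

theorem t_lift_actR_compl₂ (f : G₀ →ₗ[k] G₀) (z : G₁ ⊗[k] G₀) :
    A.t (lift (A.actR.compl₂ f) z) = lift (mul k G₀) (map id f (map A.t id z)) := by
  induction z using TensorProduct.induction_on with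
  | zero => simp only [map_zero]
  | tmul y x => simp [A.equivR]
  | add z z' hz hz' => simp only [map_add, hz, hz']

theorem t_lift_actR_comp {f : G₀ →ₗ[k] G₀} {g : G₁ →ₗ[k] G₁} (hfg : f ∘ₗ A.t = A.t ∘ₗ g)
    (z : G₁ ⊗[k] G₀) :
    A.t (lift (A.actR ∘ₗ g) z) = lift (mul k G₀) (map f id (map A.t id z)) := by
  induction z using TensorProduct.induction_on with
  | zero => simp only [map_zero]
  | tmul y x => simp [A.equivR, ← LinearMap.comp_apply A.t g, ← hfg]
  | add z z' hz hz' => simp only [map_add, hz, hz']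

end AssocTwoAlgebra

theorem deg0_hopf {k G₀ G₁ : Type*} [CommRing k]
    [NonUnitalRing G₀] [NonUnitalRing G₁] [Module k G₀] [Module k G₁]
    [SMulCommClass k G₀ G₀] [IsScalarTower k G₀ G₀]
    (A : AssocTwoAlgebra k G₀ G₁)
    (Δl : G₀ →ₗ[k] G₁ ⊗[k] G₀)
    -- units
    (η₁ : G₁) (η₀ : G₀) (hη : A.t η₁ = η₀)
    -- counits, with ε respecting the t-map
    (ε₀ : G₀ →ₗ[k] k)
    -- the antipode intertwines the t-map
    (S0 : G₀ →ₗ[k] G₀) (S1 : G₁ →ₗ[k] G₁) (hS : S0 ∘ₗ A.t = A.t ∘ₗ S1)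
    -- antipode conditions on the graded coproduct components
    -- μ∘(id⊗S₀⁰)∘Δ₀ˡ = η₋₁·ε₀
    (hant1 : ∀ x : G₀, TensorProduct.lift (A.actR.compl₂ S0) (Δl x) = ε₀ x • η₁)
    -- μ∘(S₀¹⊗id)∘Δ₀ˡ = η₋₁·ε₀
    (hant2 : ∀ x : G₀, TensorProduct.lift (A.actR ∘ₗ S1) (Δl x) = ε₀ x • η₁) :
    -- conclusion: (G₀, Δ₀', S₀⁰, η₀, ε₀) is a Hopf algebra
    ∀ x : G₀,
      TensorProduct.lift (LinearMap.mul k G₀)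
          (TensorProduct.map LinearMap.id S0
            (TensorProduct.map A.t LinearMap.id (Δl x))) = ε₀ x • η₀ ∧
      TensorProduct.lift (LinearMap.mul k G₀)
          (TensorProduct.map S0 LinearMap.id
            (TensorProduct.map A.t LinearMap.id (Δl x))) = ε₀ x • η₀ := by
  intro x
  constructor
  · rw [← A.t_lift_actR_compl₂, hant1, map_smul, hη]
  · rw [← A.t_lift_actR_comp hS, hant2, map_smul, hη]
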